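/- In the category FinAttr(V,U), if f_a : D_a → G is a neutral morphism for all 1 ≤ a ≤ p (p ≥ 1), then there exists a limit ⟨D, e₁,…,e_p⟩ over ⟨f₁,…,f_p⟩ (a wide pullback) such that all e_a are neutral morphisms. -/

import Mathlib

open CategoryTheory

universe v₁ u₁ v₂ u₂ u

variable {𝓕 : Type u₁} [Category.{v₁} 𝓕] {𝓐 : Type u₂} [Category.{v₂} 𝓐]

/-- A finitely attributed structure `⟨F, A, f⟩`. -/
structure FinAttrObj (V : 𝓕 ⥤ FintypeCat.{u}) (U : 𝓐 ⥤ Type u) where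
  F : 𝓕
  A : 𝓐
  attr : ↑(V.obj F) → {s : Set (U.obj A) // s.Finite}

/-- A morphism `⟨σ, α⟩` of finitely attributed structures. -/
@[ext]
structure FinAttrHom {V : 𝓕 ⥤ FintypeCat.{u}} {U : 𝓐 ⥤ Type u}
    (X Y : FinAttrObj V U) where
  σ : X.F ⟶ Y.F
  α : X.A ⟶ Y.A
  cond : ∀ x : ↑(V.obj X.F),
    (U.map α) '' (X.attr x).1 ⊆ (Y.attr (V.map σ x)).1

/-- The category FinAttr(V,U) of finitely attributed structures. -/
instance FinAttr.category (V : 𝓕 ⥤ FintypeCat.{u}) (U : 𝓐 ⥤ Type u) :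
    Category.{max v₁ v₂} (FinAttrObj V U) where
  Hom X Y := FinAttrHom X Y
  id X := ⟨𝟙 X.F, 𝟙 X.A, by simp⟩
  comp {X Y Z} φ ψ :=
    ⟨φ.σ ≫ ψ.σ, φ.α ≫ ψ.α, by
      intro x
      rw [U.map_comp, V.map_comp]
      calc (U.map ψ.α ∘ U.map φ.α) '' (X.attr x).1
          = U.map ψ.α '' (U.map φ.α '' (X.attr x).1) := by
            rw [Set.image_comp]
        _ ⊆ U.map ψ.α '' (Y.attr (V.map φ.σ x)).1 :=
            Set.image_mono (φ.cond x)
        _ ⊆ (Z.attr (V.map ψ.σ (V.map φ.σ x))).1 := ψ.cond _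
        _ = (Z.attr ((V.map φ.σ ≫ V.map ψ.σ) x)).1 := rfl⟩
  id_comp φ := by apply FinAttrHom.ext <;> simp
  comp_id φ := by apply FinAttrHom.ext <;> simp
  assoc φ ψ χ := by apply FinAttrHom.ext <;> simp

/-!
The wide pullback is built componentwise. Its `𝓕`-part is the wide pullback of the `σ`-parts,
which exists in any category with pullbacks. Since every `f a` is neutral, all legs of a cone
over the `f a` share the same `α`-part, so the `𝓐`-part can stay `A` with identity projections;
the attribute set of a point is then the intersection of the attribute sets of its projections,
which is finite because `p ≥ 1`.
-/

open Limits

/- Pullbacks give binary products in `Over B`, which also has the terminal object `𝟙 B`;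
finite products in `Over B` are exactly finite wide pullbacks in `C`. -/
theorem hasWidePullback_of_hasPullbacks {C : Type*} [Category C] [HasPullbacks C]
    {J : Type*} [Finite J] (B : C) (objs : J → C) (arrows : ∀ j, objs j ⟶ B) :
    HasWidePullback B objs arrows := by
  have := Over.ConstructProducts.over_binaryProduct_of_pullback (B := B)
  have := Over.over_hasTerminal B
  have := hasFiniteProducts_of_has_binary_and_terminal (C := Over B)
  let F := Discrete.functor fun j => Over.mk (arrows j)
  exact HasLimit.mk ⟨_, IsLimit.ofRightAdjoint
    (Over.ConstructProducts.conesEquiv B F).toAdjunction (limit.isLimit F)⟩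

theorem WidePullback.hom_ext_of_nonempty {C : Type*} [Category C] {J : Type*} [Nonempty J]
    {B : C} {objs : J → C} {arrows : ∀ j, objs j ⟶ B} [HasWidePullback B objs arrows] {X : C}
    {g₁ g₂ : X ⟶ widePullback B objs arrows}
    (h : ∀ j, g₁ ≫ WidePullback.π arrows j = g₂ ≫ WidePullback.π arrows j) : g₁ = g₂ := by
  refine WidePullback.hom_ext _ _ _ h ?_
  rw [← WidePullback.π_arrow arrows (Classical.arbitrary J), reassoc_of% h]

namespace FinAttr

variable {V : 𝓕 ⥤ FintypeCat.{u}} {U : 𝓐 ⥤ Type u}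

@[simp]
lemma comp_α {X Y Z : FinAttrObj V U} (φ : X ⟶ Y) (ψ : Y ⟶ Z) : (φ ≫ ψ).α = φ.α ≫ ψ.α := rfl

lemma hom_ext {X Y : FinAttrObj V U} {φ ψ : X ⟶ Y} (hσ : φ.σ = ψ.σ) (hα : φ.α = ψ.α) :
    φ = ψ :=
  FinAttrHom.ext hσ hα

section WidePullback

variable {ι : Type*} {G : 𝓕} {A : 𝓐} {gattr : V.obj G → {s : Set (U.obj A) // s.Finite}}
  {D : ι → 𝓕} {dattr : ∀ i, V.obj (D i) → {s : Set (U.obj A) // s.Finite}}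
  (f : ∀ i, FinAttrObj.mk (D i) A (dattr i) ⟶ FinAttrObj.mk G A gattr)

lemma α_eq_of_comp_eq_of_neutral (hf : ∀ i, (f i).α = 𝟙 A) {Z : FinAttrObj V U}
    {z : ∀ i, Z ⟶ FinAttrObj.mk (D i) A (dattr i)} {i j : ι} (h : z i ≫ f i = z j ≫ f j) :
    (z i).α = (z j).α := by
  simpa [hf] using congrArg FinAttrHom.α h

variable [Nonempty ι] [HasWidePullback G D fun i => (f i).σ]

noncomputable abbrev widePullbackObj : FinAttrObj V U where
  F := widePullback G D fun i => (f i).σ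
  A := A
  attr x := ⟨⋂ i, (dattr i (V.map (WidePullback.π _ i) x)).1,
    (dattr _ _).2.subset (Set.iInter_subset _ (Classical.arbitrary ι))⟩

noncomputable def widePullbackπ (i : ι) : widePullbackObj f ⟶ FinAttrObj.mk (D i) A (dattr i) :=
  ⟨WidePullback.π _ i, 𝟙 A, fun x => by
    rw [U.map_id]
    rintro _ ⟨y, hy, rfl⟩
    exact Set.iInter_subset _ i hy⟩

lemma widePullbackπ_α (i : ι) : (widePullbackπ f i).α = 𝟙 A := rfl

lemma widePullbackπ_comp_eq (hf : ∀ i, (f i).α = 𝟙 A) (i j : ι) :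
    widePullbackπ f i ≫ f i = widePullbackπ f j ≫ f j :=
  hom_ext ((WidePullback.π_arrow _ i).trans (WidePullback.π_arrow _ j).symm)
    (by simp [widePullbackπ, hf])

variable {f} (hf : ∀ i, (f i).α = 𝟙 A) {Z : FinAttrObj V U}
  (z : ∀ i, Z ⟶ FinAttrObj.mk (D i) A (dattr i)) (hz : ∀ i j, z i ≫ f i = z j ≫ f j)

noncomputable def widePullbackLift : Z ⟶ widePullbackObj f :=
  let i₀ := Classical.arbitrary ι
  ⟨WidePullback.lift ((z i₀).σ ≫ (f i₀).σ) (fun i => (z i).σ)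
    (fun i => congrArg FinAttrHom.σ (hz i i₀)), (z i₀).α, fun x => Set.subset_iInter fun i => by
    rw [← α_eq_of_comp_eq_of_neutral f hf (hz i i₀)]
    convert (z i).cond x using 4
    rw [← ConcreteCategory.comp_apply, ← V.map_comp, WidePullback.lift_π]⟩

lemma widePullbackLift_π (i : ι) : widePullbackLift hf z hz ≫ widePullbackπ f i = z i :=
  hom_ext (WidePullback.lift_π _ _ _ _ i)
    (by simpa [widePullbackLift, widePullbackπ] using α_eq_of_comp_eq_of_neutral f hf (hz _ i))

lemma widePullback_hom_ext {u v : Z ⟶ widePullbackObj f}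
    (h : ∀ i, u ≫ widePullbackπ f i = v ≫ widePullbackπ f i) : u = v := by
  refine hom_ext (WidePullback.hom_ext_of_nonempty fun i => congrArg FinAttrHom.σ (h i)) ?_
  simpa only [comp_α, widePullbackπ_α, Category.comp_id]
    using congrArg FinAttrHom.α (h (Classical.arbitrary ι))

end WidePullback

end FinAttr

/-- Corollary 2 of the paper: in FinAttr(V,U) (with `𝓕` having pullbacks), if
`f_a : D_a → G` is neutral for all `1 ≤ a ≤ p` (`p ≥ 1`), then there exists a limit
(wide pullback) `⟨D, e₁, …, e_p⟩` over `⟨f₁, …, f_p⟩` such that all the `e_a` are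
neutral. -/
theorem finAttr_wide_pullback (V : 𝓕 ⥤ FintypeCat.{u}) (U : 𝓐 ⥤ Type u)
    [Limits.HasPullbacks 𝓕]
    {p : ℕ} (hp : 1 ≤ p)
    {GF : 𝓕} {A : 𝓐} (gattr : ↑(V.obj GF) → {s : Set (U.obj A) // s.Finite})
    {DF : Fin p → 𝓕}
    (dattr : ∀ a, ↑(V.obj (DF a)) → {s : Set (U.obj A) // s.Finite})
    (f : ∀ a : Fin p,
      FinAttrObj.mk (DF a) A (dattr a) ⟶ FinAttrObj.mk GF A gattr)
    (hneutral : ∀ a, (f a).α = 𝟙 A) :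
    ∃ (WF : 𝓕) (wattr : ↑(V.obj WF) → {s : Set (U.obj A) // s.Finite})
      (e : ∀ a : Fin p,
        FinAttrObj.mk WF A wattr ⟶ FinAttrObj.mk (DF a) A (dattr a)),
      (∀ a, (e a).α = 𝟙 A) ∧
      (∀ a b, e a ≫ f a = e b ≫ f b) ∧
      (∀ (Z : FinAttrObj V U)
        (z : ∀ a : Fin p, Z ⟶ FinAttrObj.mk (DF a) A (dattr a)),
        (∀ a b, z a ≫ f a = z b ≫ f b) →
        ∃! u : Z ⟶ FinAttrObj.mk WF A wattr, ∀ a, u ≫ e a = z a) := by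
  have : Nonempty (Fin p) := ⟨⟨0, hp⟩⟩
  have := hasWidePullback_of_hasPullbacks GF DF fun a => (f a).σ
  refine ⟨_, (FinAttr.widePullbackObj f).attr, FinAttr.widePullbackπ f,
    FinAttr.widePullbackπ_α f, FinAttr.widePullbackπ_comp_eq f hneutral, fun Z z hz => ?_⟩
  exact ⟨FinAttr.widePullbackLift hneutral z hz, FinAttr.widePullbackLift_π hneutral z hz,
    fun v hv => FinAttr.widePullback_hom_ext fun a => by rw [hv, FinAttr.widePullbackLift_π]⟩
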